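/- Let M be a finite simple matroid on n elements whose dual matroid M* is also simple, with girth d* and cogirth d, and set r = n − d − d* + 2. Let P_0(T), …, P_r(T) be the unique rational-function coefficients with χ_M(S,T) = Σ_{i=0}^{r} P_i(T) X_{n,d+i}(S,T). Then M is a uniform matroid if and only if P_0(T) = 1 and P_i(T) = 0 for all i ≥ 1. -/

import Mathlib

open Matroid Polynomial Finset
open scoped Classical

namespace PaperMatroid

variable {α : Type*}

/-- The rank of a finset in a matroid on a finite type: the maximum size of an
independent subset. -/
noncomputable def mrk [Fintype α] (M : Matroid α) (x : Finset α) : ℕ :=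
  (x.powerset.filter (fun (I : Finset α) => M.Indep (I : Set α))).sup Finset.card

/-- A circuit of a matroid: a minimal dependent set. -/
def IsCircuit (M : Matroid α) (C : Set α) : Prop :=
  M.Dep C ∧ ∀ ⦃D⦄, D ⊂ C → M.Indep D

/-- The girth of a matroid: the minimum size of a circuit. -/
noncomputable def girth (M : Matroid α) : ℕ :=
  sInf {n | ∃ C, IsCircuit M C ∧ C.ncard = n}

/-- The cogirth of a matroid: the girth of the dual matroid, i.e. the minimum
size of a cocircuit. -/
noncomputable def cogirth (M : Matroid α) : ℕ := girth M✶

/-- The finset of (finsets corresponding to) flats of a matroid on a finite type. -/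
noncomputable def flats [Fintype α] (M : Matroid α) : Finset (Finset α) :=
  Finset.univ.filter fun F => M.IsFlat ↑F

/-- The Möbius function of the lattice of flats of a matroid:
`μ(X,X) = 1`, `μ(X,Y) = -Σ_{X ⊆ Z ⊊ Y, Z a flat} μ(X,Z)` for `X ⊊ Y`, and `0` otherwise. -/
noncomputable def mob [Fintype α] (M : Matroid α) (X Y : Finset α) : ℤ :=
  if X = Y then 1
  else if X ⊆ Y then
    -∑ Z ∈ ((flats M).filter fun Z => X ⊆ Z ∧ Z ⊂ Y).attach, mob M X Z.1
  else 0
termination_by Y.card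
decreasing_by
  · have hZ := Z.2
    simp only [Finset.mem_filter] at hZ
    exact Finset.card_lt_card hZ.2.2

/-- The Möbius polynomial of a matroid, as a polynomial in `S` (the outer
variable) whose coefficients are polynomials in `T` (the inner variable):
`μ_M(S,T) = Σ_{x ∈ L} Σ_{x ⊆ y ∈ L} μ(x,y) S^{r(x)} T^{k - r(y)}`,
where `L` is the lattice of flats and `k` is the rank of `M`. -/
noncomputable def mobiusPoly [Fintype α] (M : Matroid α) : Polynomial (Polynomial ℤ) :=
  ∑ x ∈ flats M, ∑ y ∈ (flats M).filter (fun y => x ⊆ y),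
    mob M x y • (Polynomial.X ^ (mrk M x) *
      Polynomial.C (Polynomial.X ^ (mrk M Finset.univ - mrk M y)))

/-- The coboundary polynomial of a matroid, as a polynomial in `S` (the outer
variable) whose coefficients are polynomials in `T` (the inner variable):
`χ_M(S,T) = Σ_{x ∈ L} Σ_{x ⊆ y ∈ L} μ(x,y) S^{|x|} T^{k - r(y)}`,
where `L` is the lattice of flats, `|x|` is the number of ground-set elements
of the flat `x`, and `k` is the rank of `M`. -/
noncomputable def cobPoly [Fintype α] (M : Matroid α) : Polynomial (Polynomial ℤ) :=
  ∑ x ∈ flats M, ∑ y ∈ (flats M).filter (fun y => x ⊆ y),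
    mob M x y • (Polynomial.X ^ x.card *
      Polynomial.C (Polynomial.X ^ (mrk M Finset.univ - mrk M y)))

/-- The uniform matroid of rank `m` on `Fin n`: the independent sets are
exactly the subsets of size at most `m`. -/
noncomputable def unif (n m : ℕ) : Matroid (Fin n) :=
  (IndepMatroid.ofFinite (Set.finite_univ (α := Fin n))
    (fun I => I.ncard ≤ m)
    (by simp)
    (fun I J hJ hIJ => le_trans (Set.ncard_le_ncard hIJ (Set.toFinite J)) hJ)
    (fun I J hI hJ hIJ => by
      obtain ⟨e, heJ, heI⟩ : ∃ e ∈ J, e ∉ I := by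
        by_contra h
        push_neg at h
        exact absurd (Set.ncard_le_ncard h (Set.toFinite I)) (not_le.mpr hIJ)
      refine ⟨e, heJ, heI, ?_⟩
      show (insert e I).ncard ≤ m
      rw [Set.ncard_insert_of_notMem heI (Set.toFinite I)]
      exact le_trans (Nat.succ_le_of_lt hIJ) hJ
    )
    (fun I _ => Set.subset_univ I)).matroid

/-- `X_{n,e}`: the coboundary polynomial of the uniform matroid of rank
`n - e + 1` on `n` elements, with coefficients viewed as rational functions
in the variable `T`. -/
noncomputable def XunifR (n e : ℕ) : Polynomial (RatFunc ℚ) :=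
  (cobPoly (unif n (n - e + 1))).map
    ((algebraMap (Polynomial ℚ) (RatFunc ℚ)).comp (Polynomial.mapRingHom (Int.castRingHom ℚ)))

/-- The coboundary polynomial of a matroid with coefficients viewed as
rational functions in the variable `T`. -/
noncomputable def cobPolyR [Fintype α] (M : Matroid α) : Polynomial (RatFunc ℚ) :=
  (cobPoly M).map
    ((algebraMap (Polynomial ℚ) (RatFunc ℚ)).comp (Polynomial.mapRingHom (Int.castRingHom ℚ)))

/-!
If `M` is uniform of rank `m`, its girth is `m + 1` and its cogirth `n - m + 1`, so `r = 0`, and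
comparing the coefficients of `S^n` (both `1`) gives `P₀ = 1`.

Conversely the conditions say `χ_M = X_{n,d}`, the coboundary polynomial of a uniform matroid `U`.
In the coefficient of `S^j`, if every flat of size `j` has rank at least `s`, the top power of `T`
is at most `T^(k-s)`, and its coefficient there counts the flats of size `j` and rank `s`. For
`j = 0` this shows that `M` and `U` have the same rank `k`. A dependent proper flat of `M` of size
`j` would then give a term `S^j T^t` with `t > k - j`, which `χ_U` lacks because the proper flats
of `U` are independent. Finally, a matroid whose proper flats are independent is uniform.
-/

section Rank

variable [Fintype α] {M : Matroid α} {x y : Finset α}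

lemma coe_mrk (M : Matroid α) (x : Finset α) : (mrk M x : ℕ∞) = M.eRk ↑x := by
  refine le_antisymm ?_ (M.eRk_le_iff.2 fun I hIx hI => ?_)
  · obtain ⟨I, hI, hcard⟩ := (x.powerset.filter fun I : Finset α => M.Indep ↑I).exists_mem_eq_sup
      ⟨∅, by simp⟩ card
    simp only [Finset.mem_filter, Finset.mem_powerset] at hI
    rw [mrk, hcard, ← Set.encard_coe_eq_coe_finsetCard]
    exact hI.2.encard_le_eRk_of_subset (by exact_mod_cast hI.1)
  · lift I to Finset α using (x.finite_toSet.subset hIx)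
    rw [Set.encard_coe_eq_coe_finsetCard, Nat.cast_le]
    exact Finset.le_sup (f := Finset.card) (by simpa using And.intro hIx hI)

lemma mrk_mono (M : Matroid α) (h : x ⊆ y) : mrk M x ≤ mrk M y := by
  exact_mod_cast (coe_mrk M x).trans_le ((M.eRk_mono (by exact_mod_cast h)).trans (coe_mrk M y).ge)

lemma mrk_le_mrk_univ (M : Matroid α) (x : Finset α) : mrk M x ≤ mrk M univ :=
  mrk_mono M (subset_univ x)

@[simp] lemma mrk_empty (M : Matroid α) : mrk M ∅ = 0 := by
  simp [mrk]

lemma mrk_eq_card_of_indep (h : M.Indep ↑x) : mrk M x = x.card := by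
  exact_mod_cast (coe_mrk M x).trans (h.eRk_eq_encard.trans (Set.encard_coe_eq_coe_finsetCard x))

lemma mrk_lt_card_of_dep (h : M.Dep ↑x) : mrk M x < x.card := by
  have := M.eRk_lt_encard_of_dep_of_finite x.finite_toSet h
  rwa [← coe_mrk, Set.encard_coe_eq_coe_finsetCard, Nat.cast_lt] at this

lemma mrk_lt_mrk_of_isFlat (hx : M.IsFlat ↑x) (hxy : x ⊂ y) (hy : ↑y ⊆ M.E) :
    mrk M x < mrk M y := by
  obtain ⟨e, hey, hex⟩ := Finset.exists_of_ssubset hxy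
  have hins : M.eRk (insert e ↑x) = M.eRk ↑x + 1 :=
    M.eRk_insert_eq_add_one ⟨hy hey, by rwa [hx.closure]⟩
  have hle : M.eRk (insert e ↑x) ≤ M.eRk ↑y :=
    M.eRk_mono (Set.insert_subset hey (by exact_mod_cast hxy.subset))
  rw [hins, ← coe_mrk, ← coe_mrk] at hle
  exact_mod_cast ENat.add_one_le_iff (ENat.natCast_ne_top _) |>.1 hle

end Rank

lemma isFlat_empty_of_loopless (M : Matroid α) [M.Loopless] : M.IsFlat ∅ := by
  simpa [closure_empty, M.loops_eq_empty] using M.isFlat_closure ∅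

@[simp] lemma mob_self [Fintype α] (M : Matroid α) (x : Finset α) : mob M x x = 1 := by
  simp [mob]

section Coefficients

variable [Fintype α] {N : Matroid α} {j s t : ℕ}

lemma mem_flats {x : Finset α} : x ∈ flats N ↔ N.IsFlat ↑x := by
  simp [flats]

lemma cobPoly_coeff_coeff (N : Matroid α) (j t : ℕ) :
    ((cobPoly N).coeff j).coeff t =
      ∑ x ∈ (flats N).filter (fun x => x.card = j),
        ∑ y ∈ (flats N).filter (fun y => x ⊆ y),
          if mrk N univ - mrk N y = t then mob N x y else 0 := by
  have hterm : ∀ c e : ℕ,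
      (((X : ℤ[X][X]) ^ c * C ((X : ℤ[X]) ^ e)).coeff j).coeff t =
        if c = j ∧ e = t then 1 else 0 := by
    intro c e
    rw [mul_comm, C_mul_X_pow_eq_monomial, coeff_monomial]
    by_cases hc : c = j <;> simp [hc, coeff_X_pow, eq_comm]
  simp only [cobPoly, finsetSum_coeff, coeff_smul]
  rw [Finset.sum_filter]
  refine Finset.sum_congr rfl fun x _ => ?_
  simp only [hterm, smul_eq_mul, mul_ite, mul_one, mul_zero]
  by_cases hc : x.card = j <;> simp [hc]

lemma cobPoly_coeff_coeff_eq_zero (hs : ∀ x ∈ flats N, x.card = j → s ≤ mrk N x)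
    (ht : mrk N univ - s < t) : ((cobPoly N).coeff j).coeff t = 0 := by
  rw [cobPoly_coeff_coeff]
  refine Finset.sum_eq_zero fun x hx => Finset.sum_eq_zero fun y hy => if_neg ?_
  simp only [Finset.mem_filter] at hx hy
  have := mrk_mono N hy.2
  have := hs x hx.1 hx.2
  omega

/-- Only the diagonal terms `μ(x, x) = 1` contribute. -/
lemma cobPoly_coeff_coeff_rank_sub (hE : N.E = Set.univ)
    (hs : ∀ x ∈ flats N, x.card = j → s ≤ mrk N x) :
    ((cobPoly N).coeff j).coeff (mrk N univ - s) =
      ((flats N).filter fun x => x.card = j ∧ mrk N x = s).card := by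
  rw [cobPoly_coeff_coeff, ← Finset.filter_filter, Finset.natCast_card_filter]
  refine Finset.sum_congr rfl fun x hx => ?_
  simp only [Finset.mem_filter] at hx
  have hsx := hs x hx.1 hx.2
  have hxk := mrk_le_mrk_univ N x
  rw [Finset.sum_eq_single_of_mem x (by simp [hx.1]), mob_self]
  · split_ifs <;> omega
  · intro y hy hyx
    simp only [Finset.mem_filter] at hy
    have := mrk_lt_mrk_of_isFlat (mem_flats.1 hx.1)
      (Finset.ssubset_iff_subset_ne.2 ⟨hy.2, hyx.symm⟩) (hE ▸ Set.subset_univ _)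
    have := mrk_le_mrk_univ N y
    exact if_neg (by omega)

lemma cobPoly_coeff_card (hE : N.E = Set.univ) : (cobPoly N).coeff (Fintype.card α) = 1 := by
  have hs : ∀ x ∈ flats N, x.card = Fintype.card α → mrk N univ ≤ mrk N x := by
    intro x _ hx
    rw [(Finset.card_eq_iff_eq_univ x).1 hx]
  have huniv : (flats N).filter (fun x => x.card = Fintype.card α ∧ mrk N x = mrk N univ) =
      {univ} := by
    ext x
    simp only [Finset.mem_filter, Finset.mem_singleton, mem_flats, Finset.card_eq_iff_eq_univ]
    constructor
    · exact fun h => h.2.1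
    · rintro rfl
      exact ⟨by simpa [hE] using N.ground_isFlat, rfl, rfl⟩
  ext t
  rw [coeff_one]
  rcases Nat.eq_zero_or_pos t with rfl | ht
  · have h := cobPoly_coeff_coeff_rank_sub hE hs
    rw [Nat.sub_self, huniv] at h
    simp [h]
  · rw [cobPoly_coeff_coeff_eq_zero hs (by omega), if_neg (by omega)]

lemma natDegree_cobPoly_coeff_zero (hE : N.E = Set.univ) [N.Loopless] :
    ((cobPoly N).coeff 0).natDegree = mrk N univ := by
  have hs : ∀ x ∈ flats N, x.card = 0 → 0 ≤ mrk N x := fun _ _ _ => Nat.zero_le _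
  have hempty : (flats N).filter (fun x => x.card = 0 ∧ mrk N x = 0) = {∅} := by
    ext x
    simp only [Finset.mem_filter, Finset.mem_singleton, mem_flats, Finset.card_eq_zero]
    constructor
    · exact fun h => h.2.1
    · rintro rfl
      exact ⟨by simpa using isFlat_empty_of_loopless N, rfl, mrk_empty N⟩
  refine natDegree_eq_of_le_of_coeff_ne_zero (natDegree_le_iff_coeff_eq_zero.2 fun t ht =>
    cobPoly_coeff_coeff_eq_zero hs (by omega)) ?_
  have h := cobPoly_coeff_coeff_rank_sub hE hs
  rw [Nat.sub_zero, hempty] at h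
  simp [h]

end Coefficients

section Girth

variable {M : Matroid α} {C : Set α}

lemma isCircuit_iff : IsCircuit M C ↔ M.IsCircuit C :=
  isCircuit_iff_forall_ssubset.symm

lemma girth_le_ncard (hC : M.IsCircuit C) : girth M ≤ C.ncard :=
  Nat.sInf_le ⟨C, isCircuit_iff.2 hC, rfl⟩

lemma loopless_of_one_lt_girth [Finite α] (h : 1 < girth M) : M.Loopless :=
  loopless_iff_forall_isCircuit.2 fun _ hC =>
    Set.one_lt_ncard_iff_nontrivial.1 (h.trans_le (girth_le_ncard hC))

end Girth

/-- `M` is the uniform matroid of rank `min m |α|` on all of `α`. -/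
structure IsUniform (M : Matroid α) (m : ℕ) : Prop where
  ground_eq : M.E = Set.univ
  indep_iff : ∀ X, M.Indep X ↔ X.ncard ≤ m

lemma unif_isUniform (n m : ℕ) : IsUniform (unif n m) m :=
  ⟨rfl, fun _ => by simp [unif]⟩

namespace IsUniform

variable {M : Matroid α} {m : ℕ}

lemma loopless (h : IsUniform M m) (hm : 1 ≤ m) : M.Loopless :=
  loopless_iff_forall_isNonloop.2 fun e _ => indep_singleton.1 ((h.indep_iff _).2 (by simpa))

variable [Fintype α]

lemma isCircuit_iff_ncard (h : IsUniform M m) {C : Set α} : M.IsCircuit C ↔ C.ncard = m + 1 := by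
  rw [isCircuit_iff_forall_ssubset, Dep, h.indep_iff, h.ground_eq]
  constructor
  · rintro ⟨⟨hC, -⟩, hsub⟩
    obtain ⟨e, he⟩ := Set.nonempty_of_ncard_ne_zero (s := C) (by omega)
    have hCe := (h.indep_iff _).1 (hsub (Set.sdiff_singleton_ssubset.2 he))
    rw [Set.ncard_sdiff_singleton_of_mem he] at hCe
    omega
  · intro hC
    refine ⟨⟨by omega, Set.subset_univ C⟩, fun I hI => (h.indep_iff I).2 ?_⟩
    have := Set.ncard_lt_ncard hI
    omega

lemma girth_eq (h : IsUniform M m) (hm : m < Fintype.card α) : girth M = m + 1 := by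
  obtain ⟨C, -, hC⟩ := Set.exists_subset_card_eq (s := (Set.univ : Set α)) (n := m + 1)
    (by rw [Set.ncard_univ, Nat.card_eq_fintype_card]; omega)
  have hCirc := h.isCircuit_iff_ncard.2 hC
  refine le_antisymm (hC ▸ girth_le_ncard hCirc)
    (le_csInf ⟨m + 1, C, isCircuit_iff.2 hCirc, hC⟩ ?_)
  rintro _ ⟨D, hD, rfl⟩
  exact (h.isCircuit_iff_ncard.1 (isCircuit_iff.1 hD)).ge

lemma girth_eq_zero (h : IsUniform M m) (hm : Fintype.card α ≤ m) : girth M = 0 := by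
  have : {k | ∃ C, IsCircuit M C ∧ C.ncard = k} = ∅ :=
    Set.eq_empty_of_forall_notMem fun _ ⟨C, hC, _⟩ => hC.1.not_indep <|
      (h.indep_iff C).2 <| (Set.ncard_le_card C).trans (Nat.card_eq_fintype_card.trans_le hm)
  rw [girth, this, Nat.sInf_empty]

lemma isBase_iff (h : IsUniform M m) (hm : m ≤ Fintype.card α) {B : Set α} :
    M.IsBase B ↔ B.ncard = m := by
  constructor
  · intro hB
    refine le_antisymm ((h.indep_iff B).1 hB.indep) (not_lt.1 fun hlt => ?_)
    obtain ⟨e, he⟩ := (Set.ne_univ_iff_exists_notMem B).1 fun hBu => by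
      rw [hBu, Set.ncard_univ, Nat.card_eq_fintype_card] at hlt
      omega
    refine (hB.insert_dep ⟨h.ground_eq ▸ Set.mem_univ e, he⟩).not_indep ((h.indep_iff _).2 ?_)
    rw [Set.ncard_insert_of_notMem he]
    omega
  · intro hB
    refine ((h.indep_iff B).2 hB.le).isBase_of_maximal fun J hJ hBJ =>
      Set.eq_of_subset_of_ncard_le hBJ ?_
    exact ((h.indep_iff J).1 hJ).trans hB.ge

lemma dual (h : IsUniform M m) (hm : m ≤ Fintype.card α) :
    IsUniform M✶ (Fintype.card α - m) := by
  refine ⟨h.ground_eq, fun X => ?_⟩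
  rw [dual_indep_iff_exists', h.ground_eq]
  simp only [Set.subset_univ, true_and, h.isBase_iff hm]
  constructor
  · rintro ⟨B, rfl, hXB⟩
    have := Set.ncard_union_eq hXB
    have := Set.ncard_le_card (X ∪ B)
    rw [Nat.card_eq_fintype_card] at this
    omega
  · intro hX
    obtain ⟨B, hB, hBm⟩ := Set.exists_subset_card_eq (s := Xᶜ) (n := m) (by
      rw [Set.ncard_compl, Nat.card_eq_fintype_card]
      omega)
    exact ⟨B, hBm, Set.disjoint_of_subset_right hB disjoint_compl_right⟩

/-- A flat `F ≠ α` with more than `m` elements contains an independent `m`-set, which spans. -/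
lemma indep_of_isFlat (h : IsUniform M m) {F : Set α} (hF : M.IsFlat F) (hne : F ≠ Set.univ) :
    M.Indep F := by
  rw [h.indep_iff]
  by_contra! hlt
  obtain ⟨B, hBF, hB⟩ := Set.exists_subset_card_eq hlt.le
  obtain ⟨e, he⟩ := (Set.ne_univ_iff_exists_notMem F).1 hne
  have hBi : M.Indep B := (h.indep_iff B).2 hB.le
  have heB : e ∉ M.closure B := fun heB => he (hF.closure ▸ M.closure_subset_closure hBF heB)
  have hins := hBi.insert_indep_iff_of_notMem (fun heB' => he (hBF heB')) |>.2
    ⟨h.ground_eq ▸ Set.mem_univ e, heB⟩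
  rw [h.indep_iff, Set.ncard_insert_of_notMem (fun heB' => he (hBF heB')), hB] at hins
  omega

end IsUniform

/-- The closure of a dependent set of size at most the rank would be a proper dependent flat. -/
lemma indep_iff_encard_le_eRank {M : Matroid α} [M.RankFinite]
    (h : ∀ F, M.IsFlat F → F ≠ M.E → M.Indep F) {X : Set α} (hX : X ⊆ M.E) :
    M.Indep X ↔ X.encard ≤ M.eRank := by
  refine ⟨Matroid.Indep.encard_le_eRank, fun hle => by_contra fun hXi => ?_⟩
  have hlt := (show M.Dep X from ⟨hXi, hX⟩).eRk_lt_encard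
  have hcl : M.closure X ≠ M.E := fun hcl => by
    have := M.eRk_closure_eq X
    rw [hcl, eRk_ground] at this
    exact (hlt.trans_le hle).ne this.symm
  have hind := (h _ (M.isFlat_closure X) hcl).eRk_eq_encard
  rw [eRk_closure_eq] at hind
  exact (hlt.trans_le (Set.encard_le_encard (M.subset_closure X hX))).ne hind

section Recognition

variable {β : Type*} [Fintype α] [Fintype β] {M : Matroid α} {N : Matroid β}

/-- A dependent flat of size `j` and rank below `k` forces a nonzero coefficient of `S^j T^t` for
some `t > k - j`, which is impossible when all flats of size `j` of `N` are independent. -/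
lemma indep_of_cobPoly_eq (hE : M.E = Set.univ) (hpoly : cobPoly M = cobPoly N)
    (hk : mrk M univ = mrk N univ) {j : ℕ} (hN : ∀ x ∈ flats N, x.card = j → N.Indep ↑x)
    {F : Finset α} (hF : F ∈ flats M) (hFj : F.card = j) (hFk : mrk M F < mrk M univ) :
    M.Indep ↑F := by
  by_contra hdep
  have hlt : mrk M F < j := hFj ▸ mrk_lt_card_of_dep ⟨hdep, hE ▸ Set.subset_univ _⟩
  obtain ⟨x₀, hx₀, hmin⟩ := ((flats M).filter fun x => x.card = j).exists_min_image (mrk M)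
    ⟨F, Finset.mem_filter.2 ⟨hF, hFj⟩⟩
  have hx₀F := hmin F (Finset.mem_filter.2 ⟨hF, hFj⟩)
  have hcount := cobPoly_coeff_coeff_rank_sub hE
    fun x hx hxj => hmin x (Finset.mem_filter.2 ⟨hx, hxj⟩)
  have hne : ((cobPoly M).coeff j).coeff (mrk M univ - mrk M x₀) ≠ 0 := by
    rw [hcount, Nat.cast_ne_zero, ← Nat.pos_iff_ne_zero, Finset.card_pos]
    rw [Finset.mem_filter] at hx₀
    exact ⟨x₀, Finset.mem_filter.2 ⟨hx₀.1, hx₀.2, rfl⟩⟩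
  refine hne ?_
  rw [hpoly, hk]
  refine cobPoly_coeff_coeff_eq_zero (s := j) (fun x hx hxj => ?_) (by omega)
  rw [mrk_eq_card_of_indep (hN x hx hxj), hxj]

theorem isUniform_of_cobPoly_eq (hE : M.E = Set.univ) [M.Loopless] {m : ℕ}
    (hN : IsUniform N m) (hm : 1 ≤ m) (hcard : Fintype.card α = Fintype.card β)
    (hpoly : cobPoly M = cobPoly N) : IsUniform M (mrk M univ) := by
  have := hN.loopless hm
  have hk : mrk M univ = mrk N univ := by
    rw [← natDegree_cobPoly_coeff_zero hE, hpoly, natDegree_cobPoly_coeff_zero hN.ground_eq]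
  have hflat : ∀ F, M.IsFlat F → F ≠ M.E → M.Indep F := by
    intro F hF hne
    lift F to Finset α using F.toFinite
    have hFu : F ≠ univ := by
      rintro rfl
      simp [hE] at hne
    have hFcard : F.card < Fintype.card β := hcard ▸ Finset.card_lt_card (ssubset_univ_iff.2 hFu)
    refine indep_of_cobPoly_eq hE hpoly hk (fun x hx hxj => hN.indep_of_isFlat (mem_flats.1 hx) ?_)
      (mem_flats.2 hF) rfl (mrk_lt_mrk_of_isFlat hF (ssubset_univ_iff.2 hFu) (by simp [hE]))
    rintro hxu
    rw [Finset.coe_eq_univ.1 hxu, card_univ] at hxj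
    omega
  refine ⟨hE, fun X => ?_⟩
  rw [indep_iff_encard_le_eRank hflat (hE ▸ Set.subset_univ X), ← X.toFinite.cast_ncard_eq,
    ← eRk_univ_eq, ← Finset.coe_univ, ← coe_mrk, Nat.cast_le]

end Recognition

section RationalCoefficients

lemma coeff_cobPolyR_card [Fintype α] {M : Matroid α} (hE : M.E = Set.univ) :
    (cobPolyR M).coeff (Fintype.card α) = 1 := by
  rw [cobPolyR, coeff_map, cobPoly_coeff_card hE, map_one]

lemma coeff_XunifR_self (n e : ℕ) : (XunifR n e).coeff n = 1 := by
  have h := coeff_cobPolyR_card (unif_isUniform n (n - e + 1)).ground_eq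
  rwa [Fintype.card_fin] at h

lemma cobPoly_eq_of_cobPolyR_eq_XunifR [Fintype α] {M : Matroid α} {n e : ℕ}
    (h : cobPolyR M = XunifR n e) : cobPoly M = cobPoly (unif n (n - e + 1)) := by
  refine map_injective _ ?_ h
  rw [RingHom.coe_comp, coe_mapRingHom]
  exact (RatFunc.algebraMap_injective ℚ).comp (map_injective _ Int.cast_injective)

end RationalCoefficients

theorem uniform_iff_zeta_coeffs_general {α : Type*} [Fintype α] (M : Matroid α)
    (hE : M.E = Set.univ) (n : ℕ) (hn : n = Fintype.card α)
    (hsimple : 2 < girth M)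
    (P : ℕ → RatFunc ℚ)
    (hP : cobPolyR M =
      ∑ i ∈ Finset.range (n + 2 - cogirth M - girth M + 1),
        Polynomial.C (P i) * XunifR n (cogirth M + i)) :
    (∃ m : ℕ, ∀ x : Set α, x ⊆ M.E → (M.Indep x ↔ x.ncard ≤ m)) ↔
      (P 0 = 1 ∧ ∀ i : ℕ, 1 ≤ i → i ≤ n + 2 - cogirth M - girth M → P i = 0) := by
  constructor
  · rintro ⟨m, hm⟩
    have hU : IsUniform M m := ⟨hE, fun X => hm X (hE ▸ Set.subset_univ X)⟩
    have hmn : m < n := hn ▸ not_le.1 fun h => by rw [hU.girth_eq_zero h] at hsimple; omega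
    have hg : girth M = m + 1 := hU.girth_eq (hn ▸ hmn)
    have hd : cogirth M = n - m + 1 := hn ▸ (hU.dual (hn ▸ hmn.le)).girth_eq (by omega)
    have hr : n + 2 - cogirth M - girth M = 0 := by omega
    rw [hr, range_one, sum_singleton] at hP
    have hcoeff := congrArg (coeff · n) hP
    simp only [coeff_C_mul, coeff_XunifR_self, mul_one, hn, coeff_cobPolyR_card hE] at hcoeff
    exact ⟨hcoeff.symm, fun i hi1 hi2 => by omega⟩
  · rintro ⟨hP0, hPi⟩
    have hX : cobPolyR M = XunifR n (cogirth M) := by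
      rw [hP, sum_eq_single_of_mem 0 (mem_range.2 (Nat.succ_pos _)), hP0, map_one, one_mul,
        Nat.add_zero]
      intro i hi hi0
      rw [hPi i (by omega) (Nat.lt_succ_iff.1 (mem_range.1 hi)), map_zero, zero_mul]
    have := loopless_of_one_lt_girth (M := M) (by omega)
    have hU := isUniform_of_cobPoly_eq hE (unif_isUniform n (n - cogirth M + 1)) (by omega)
      (by simp [hn]) (cobPoly_eq_of_cobPolyR_eq_XunifR hX)
    exact ⟨_, fun X _ => hU.indep_iff X⟩

/-- Let `M` be a finite simple matroid on `n` elements with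
simple dual, girth `d*`, cogirth `d`, and `r = n - d - d* + 2`. If
`P_0(T), …, P_r(T)` are the (unique) coefficients with
`χ_M(S,T) = Σ_{i=0}^r P_i(T) X_{n,d+i}(S,T)`, then `M` is a uniform matroid if
and only if `P_0(T) = 1` and `P_i(T) = 0` for all `i ≥ 1`. -/
theorem uniform_iff_zeta_coeffs {α : Type*} [Fintype α] (M : Matroid α)
    (hE : M.E = Set.univ) (n : ℕ) (hn : n = Fintype.card α)
    (hsimple : 2 < girth M) (hdualsimple : 2 < girth M✶)
    (P : ℕ → RatFunc ℚ)
    (hP : cobPolyR M =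
      ∑ i ∈ Finset.range (n + 2 - cogirth M - girth M + 1),
        Polynomial.C (P i) * XunifR n (cogirth M + i)) :
    (∃ m : ℕ, ∀ x : Set α, x ⊆ M.E → (M.Indep x ↔ x.ncard ≤ m)) ↔
      (P 0 = 1 ∧ ∀ i : ℕ, 1 ≤ i → i ≤ n + 2 - cogirth M - girth M → P i = 0) :=
  uniform_iff_zeta_coeffs_general M hE n hn hsimple P hP

end PaperMatroid
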